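/- Let T : K → H be a relative Rota-Baxter operator with respect to a cocommutative H-module bialgebra (K, ⇀) and let L(K) = P(K), L(H) = P(H) denote the Lie algebras of primitive elements. Then T restricts to a map P(K) → P(H) which is a relative Rota-Baxter operator of weight 1 on the Lie algebra P(H): [T(a), T(b)] = T(T(a) ⇀ b − T(b) ⇀ a + [a,b]) for all primitive a, b ∈ K. -/

import Mathlib

/-!
Relative Rota–Baxter operators on Hopf algebras (Li–Sheng–Tang).
`K` is a left `H`-module bialgebra via `act : H ⊗ K →ₗ K`, and
`T : K →ₗ H` is a coalgebra homomorphism satisfying the relative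
Rota–Baxter identity `T(a)·T(b) = T(a₁·(T(a₂) ⇀ b))`.
Sweedler sums are expressed by applying linear maps to `Coalgebra.comul`.
-/

open TensorProduct Coalgebra LinearMap HopfAlgebra

variable (R H K : Type*) [CommRing R] [Ring H] [HopfAlgebra R H]
  [Ring K] [HopfAlgebra R K]

/-- Cocommutativity of a coalgebra. -/
def IsCocomm (A : Type*) [AddCommGroup A] [Module R A] [Coalgebra R A] : Prop :=
  ∀ x : A, (TensorProduct.comm R A A) (Coalgebra.comul x) = Coalgebra.comul x

/-- `K` is a left `H`-module bialgebra via `act`: a module, a module algebra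
and a module coalgebra. -/
structure IsModuleBialgebra (act : H ⊗[R] K →ₗ[R] K) : Prop where
  /-- `1 ⇀ a = a` -/
  one_act : ∀ a : K, act ((1 : H) ⊗ₜ a) = a
  /-- `(x·y) ⇀ a = x ⇀ (y ⇀ a)` -/
  mul_act : ∀ (x y : H) (a : K), act ((x * y) ⊗ₜ a) = act (x ⊗ₜ act (y ⊗ₜ a))
  /-- `x ⇀ (a·b) = (x₁ ⇀ a)·(x₂ ⇀ b)` -/
  act_mul : ∀ (x : H) (a b : K),
    act (x ⊗ₜ (a * b))
      = LinearMap.mul' R K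
          (TensorProduct.map (act ∘ₗ (TensorProduct.mk R H K).flip a)
            (act ∘ₗ (TensorProduct.mk R H K).flip b) (Coalgebra.comul x))
  /-- `x ⇀ 1 = ε(x)·1` -/
  act_one : ∀ x : H, act (x ⊗ₜ (1 : K)) = Coalgebra.counit (R := R) x • (1 : K)
  /-- `act` is comultiplicative -/
  comul_act : Coalgebra.comul ∘ₗ act
      = TensorProduct.map act act ∘ₗ (Coalgebra.comul (R := R) (A := H ⊗[R] K))
  /-- `act` is counital -/
  counit_act : Coalgebra.counit ∘ₗ act = (Coalgebra.counit (R := R) (A := H ⊗[R] K))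

/-- `T : K → H` is a coalgebra homomorphism. -/
structure IsCoalgHom (T : K →ₗ[R] H) : Prop where
  comul_comp : Coalgebra.comul ∘ₗ T = TensorProduct.map T T ∘ₗ Coalgebra.comul
  counit_comp : Coalgebra.counit ∘ₗ T = (Coalgebra.counit (R := R) (A := K))

/-- The descendent product `a *_T b = a₁·(T(a₂) ⇀ b)` as a linear map. -/
noncomputable def descProd (act : H ⊗[R] K →ₗ[R] K) (T : K →ₗ[R] H) :
    K ⊗[R] K →ₗ[R] K :=
  LinearMap.mul' R K
    ∘ₗ TensorProduct.map LinearMap.id (act ∘ₗ TensorProduct.map T LinearMap.id)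
    ∘ₗ (TensorProduct.assoc R K K K).toLinearMap
    ∘ₗ TensorProduct.map Coalgebra.comul LinearMap.id

/-- The relative Rota–Baxter identity `T(a)·T(b) = T(a₁·(T(a₂) ⇀ b))`. -/
def IsRelRotaBaxter (act : H ⊗[R] K →ₗ[R] K) (T : K →ₗ[R] H) : Prop :=
  ∀ a b : K, T a * T b = T (descProd R H K act T (a ⊗ₜ b))

/-- `S_T(a) = S_H(T(a₁)) ⇀ S_K(a₂)`. -/
noncomputable def descAntipode (act : H ⊗[R] K →ₗ[R] K) (T : K →ₗ[R] H) :
    K →ₗ[R] K :=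
  act ∘ₗ TensorProduct.map ((HopfAlgebra.antipode (R := R) (A := H)) ∘ₗ T)
          (HopfAlgebra.antipode (R := R) (A := K))
    ∘ₗ Coalgebra.comul

/-- An element of a coalgebra-with-unit is primitive if
`Δ(x) = 1 ⊗ x + x ⊗ 1`. -/
def IsPrimitive (A : Type*) [Ring A] [HopfAlgebra R A] (x : A) : Prop :=
  Coalgebra.comul (R := R) x = (1 : A) ⊗ₜ x + x ⊗ₜ (1 : A)

/-!
Since `T 1` is group-like (hence a unit) and idempotent, `T 1 = 1`. For primitive `a` the Sweedler sum
`a₁ ⊗ T(a₂)` is then `1 ⊗ T a + a ⊗ 1`, so `a *_T b = T(a) ⇀ b + a b`, and antisymmetrising the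
Rota–Baxter identity in `a, b` gives the weight-1 identity.
-/

section Primitives

variable {R H K}

theorem IsCoalgHom.isGroupLikeElem_map {T : K →ₗ[R] H} (hT : IsCoalgHom R H K T) {a : K}
    (ha : IsGroupLikeElem R a) : IsGroupLikeElem R (T a) where
  counit_eq_one := by rw [← ha.counit_eq_one, ← hT.counit_comp, LinearMap.comp_apply]
  comul_eq_tmul_self := by
    rw [← LinearMap.comp_apply, hT.comul_comp, LinearMap.comp_apply, ha.comul_eq_tmul_self,
      TensorProduct.map_tmul]

theorem IsCoalgHom.isPrimitive_map {T : K →ₗ[R] H} (hT : IsCoalgHom R H K T) (hT1 : T 1 = 1)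
    {a : K} (ha : IsPrimitive R K a) : IsPrimitive R H (T a) := by
  rw [IsPrimitive, ← LinearMap.comp_apply, hT.comul_comp, LinearMap.comp_apply, ha, map_add,
    TensorProduct.map_tmul, TensorProduct.map_tmul, hT1]

theorem descProd_one_tmul (act : H ⊗[R] K →ₗ[R] K) (T : K →ₗ[R] H) (b : K) :
    descProd R H K act T ((1 : K) ⊗ₜ b) = act (T 1 ⊗ₜ b) := by
  simp [descProd, Algebra.TensorProduct.one_def]

theorem descProd_tmul_of_isPrimitive {act : H ⊗[R] K →ₗ[R] K} {T : K →ₗ[R] H}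
    (hmb : IsModuleBialgebra R H K act) (hT1 : T 1 = 1) {a : K} (ha : IsPrimitive R K a)
    (b : K) : descProd R H K act T (a ⊗ₜ b) = act (T a ⊗ₜ b) + a * b := by
  rw [IsPrimitive] at ha
  simp [descProd, ha, add_tmul, hT1, hmb.one_act]

theorem IsRelRotaBaxter.map_one {act : H ⊗[R] K →ₗ[R] K} {T : K →ₗ[R] H}
    (hrb : IsRelRotaBaxter R H K act T) (hmb : IsModuleBialgebra R H K act)
    (hT : IsCoalgHom R H K T) : T 1 = 1 := by
  have hgl : IsGroupLikeElem R (T 1) := hT.isGroupLikeElem_map .one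
  have hidem : IsIdempotentElem (T 1) := by
    rw [IsIdempotentElem, hrb, descProd_one_tmul, hmb.act_one, hgl.counit_eq_one, one_smul]
  exact (IsIdempotentElem.iff_eq_one_of_isUnit hgl.isUnit).mp hidem

theorem IsRelRotaBaxter.commutator_eq_of_isPrimitive {act : H ⊗[R] K →ₗ[R] K}
    {T : K →ₗ[R] H} (hrb : IsRelRotaBaxter R H K act T) (hmb : IsModuleBialgebra R H K act)
    (hT1 : T 1 = 1) {a b : K} (ha : IsPrimitive R K a) (hb : IsPrimitive R K b) :
    T a * T b - T b * T a = T (act (T a ⊗ₜ b) - act (T b ⊗ₜ a) + (a * b - b * a)) := by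
  rw [hrb, hrb, descProd_tmul_of_isPrimitive hmb hT1 ha, descProd_tmul_of_isPrimitive hmb hT1 hb,
    ← map_sub]
  congr 1
  abel

end Primitives

theorem relRotaBaxter_restrict_primitives (act : H ⊗[R] K →ₗ[R] K)
    (T : K →ₗ[R] H) (hmb : IsModuleBialgebra R H K act)
    (hT : IsCoalgHom R H K T) (hrb : IsRelRotaBaxter R H K act T) :
    (∀ a : K, IsPrimitive R K a → IsPrimitive R H (T a)) ∧
    (∀ a b : K, IsPrimitive R K a → IsPrimitive R K b →
      T a * T b - T b * T a
        = T (act (T a ⊗ₜ b) - act (T b ⊗ₜ a) + (a * b - b * a))) := by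
  have hT1 : T 1 = 1 := hrb.map_one hmb hT
  exact ⟨fun _ ha ↦ hT.isPrimitive_map hT1 ha,
    fun _ _ ha hb ↦ hrb.commutator_eq_of_isPrimitive hmb hT1 ha hb⟩
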